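/- arXiv:1108.1056 — 5 statements merged into one kernel-verified Lean document; each statement's English description precedes it below -/
import Mathlib

section
/- Let M be a free, finitely generated ℤ-module and G a finite group acting on M by module automorphisms. Then there exists a G-invariant submodule M' ⊆ M such that M' ∩ M^G = {0} and rank M' + rank M^G = rank M, where M^G denotes the submodule of G-fixed elements. -/
/-!
Take `M'` to be the kernel of the norm map `m ↦ ∑ g, g • m`, which is `G`-stable. The norm map
lands in `M^G` and acts on `M^G` as multiplication by `|G|`, which is injective on a torsion-free
module; so its kernel meets `M^G` trivially and its image has the rank of `M^G`, and rank–nullity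
for the norm map gives the rank identity.
-/

open Module

section RankNullity

universe u

variable {R : Type*} {M : Type u} [Ring R] [AddCommGroup M] [Module R M]

theorem LinearMap.rank_range_eq_of_range_le_of_injOn {f : M →ₗ[R] M} {F : Submodule R M}
    (hrange : LinearMap.range f ≤ F) (hinj : Set.InjOn f F) :
    Module.rank R (LinearMap.range f) = Module.rank R F := by
  refine le_antisymm (Submodule.rank_mono hrange) ?_
  refine LinearMap.rank_le_of_injective
    ((f ∘ₗ F.subtype).codRestrict _ fun x => LinearMap.mem_range_self f x) fun x y hxy => ?_
  exact Subtype.ext (hinj x.2 y.2 (congrArg Subtype.val hxy))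

theorem LinearMap.finrank_ker_add_finrank_eq_of_range_le_of_injOn [HasRankNullity.{u} R]
    [StrongRankCondition R] [Module.Finite R M] {f : M →ₗ[R] M} {F : Submodule R M}
    (hrange : LinearMap.range f ≤ F) (hinj : Set.InjOn f F) :
    finrank R (LinearMap.ker f) + finrank R F = finrank R M := by
  have hF : finrank R (LinearMap.range f) = finrank R F :=
    congrArg Cardinal.toNat (rank_range_eq_of_range_le_of_injOn hrange hinj)
  rw [← hF, ← f.quotKerEquivRange.finrank_eq, add_comm]
  exact (LinearMap.ker f).finrank_quotient_add_finrank

end RankNullity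

namespace Representation

variable {k G V : Type*} [CommRing k] [Group G] [Fintype G] [AddCommGroup V] [Module k V]
  (ρ : Representation k G V)

theorem range_norm_le_invariants : LinearMap.range ρ.norm ≤ ρ.invariants := by
  rintro _ ⟨v, rfl⟩ g
  exact ρ.self_norm_apply g v

theorem norm_apply_of_mem_invariants {v : V} (hv : v ∈ ρ.invariants) :
    ρ.norm v = Fintype.card G • v := by
  simp [norm, LinearMap.sum_apply, hv _]

theorem smul_mem_ker_norm (g : G) {v : V} (hv : v ∈ LinearMap.ker ρ.norm) :
    ρ g v ∈ LinearMap.ker ρ.norm := by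
  simpa using hv

variable [IsAddTorsionFree V]

theorem injOn_norm_invariants : Set.InjOn ρ.norm ρ.invariants := fun v hv w hw h => by
  rw [ρ.norm_apply_of_mem_invariants hv, ρ.norm_apply_of_mem_invariants hw] at h
  exact nsmul_right_injective Fintype.card_ne_zero h

theorem ker_norm_inf_invariants : LinearMap.ker ρ.norm ⊓ ρ.invariants = ⊥ := by
  refine eq_bot_iff.2 fun v ⟨hker, hv⟩ => ?_
  exact ρ.injOn_norm_invariants hv (zero_mem _) (by simpa using hker)

theorem finrank_ker_norm_add_finrank_invariants [IsDomain k] [Module.Finite k V] :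
    finrank k (LinearMap.ker ρ.norm) + finrank k ρ.invariants = finrank k V :=
  LinearMap.finrank_ker_add_finrank_eq_of_range_le_of_injOn ρ.range_norm_le_invariants
    ρ.injOn_norm_invariants

end Representation

theorem fixed_submodule_complement_general
    (M : Type*) [AddCommGroup M] [Module ℤ M] [Module.Free ℤ M] [Module.Finite ℤ M]
    (G : Type*) [Group G] [Finite G] [DistribMulAction G M]
    (F : Submodule ℤ M) (hF : (F : Set M) = {m : M | ∀ g : G, g • m = m}) :
    ∃ M' : Submodule ℤ M,
      (∀ (g : G), ∀ m ∈ M', g • m ∈ M') ∧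
      M' ⊓ F = ⊥ ∧
      Module.finrank ℤ M' + Module.finrank ℤ F = Module.finrank ℤ M := by
  have := Fintype.ofFinite G
  have := IsAddTorsionFree.of_isTorsionFree ℤ M
  -- `ℤ`-module structures are unique; the canonical one commutes with any additive action.
  obtain rfl : ‹Module ℤ M› = AddCommGroup.toIntModule M := Subsingleton.elim _ _
  let ρ := Representation.ofDistribMulAction ℤ G M
  obtain rfl : F = ρ.invariants := SetLike.coe_injective hF
  exact ⟨LinearMap.ker ρ.norm, ρ.smul_mem_ker_norm, ρ.ker_norm_inf_invariants,
    ρ.finrank_ker_norm_add_finrank_invariants⟩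

/-- Let `M` be a free, finitely generated `ℤ`-module and `G` a finite group acting on `M`
by `ℤ`-module automorphisms.  Then there is a `G`-invariant submodule `M' ⊆ M` such that
`M' ∩ M^G = {0}` and `rank M' + rank M^G = rank M`, where `M^G` is the submodule of
`G`-fixed elements. -/
theorem fixed_submodule_complement
    (M : Type*) [AddCommGroup M] [Module ℤ M] [Module.Free ℤ M] [Module.Finite ℤ M]
    (G : Type*) [Group G] [Finite G] [DistribMulAction G M] [SMulCommClass G ℤ M]
    (F : Submodule ℤ M) (hF : (F : Set M) = {m : M | ∀ g : G, g • m = m}) :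
    ∃ M' : Submodule ℤ M,
      (∀ (g : G), ∀ m ∈ M', g • m ∈ M') ∧
      M' ⊓ F = ⊥ ∧
      Module.finrank ℤ M' + Module.finrank ℤ F = Module.finrank ℤ M :=
  fixed_submodule_complement_general M G F hF
end

section
/- Let G be a finite group acting by continuous group automorphisms on a torus T (a compact connected abelian Lie group). Then there exist subtori T₁, T₂ of T such that: (1) T₁ is contained in the fixed-point subgroup T^G, (2) the fixed-point subgroup T₂^G is finite, and (3) T₁ and T₂ together generate T. -/
/-!
Let `k = |G|` and let `N = ∑_{g ∈ G} g` be the norm map of the action, a continuous endomorphism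
of `T`. Take `T₁ = N(T)` and `T₂ = (k - N)(T)`; as continuous images of `T` they are subtori.
The image of `N` is fixed by `G`, and `N` acts as `k` on fixed points, so `N ∘ (k - N) = 0`; hence
a fixed point of `T₂` is `k`-torsion, and there are only finitely many of these in a torus.
Finally `T` is divisible, so every `t = k • s = N s + (k - N) s` lies in `T₁ + T₂`.
-/

open Multiplicative

namespace AddAut

variable {A : Type*} [AddCommGroup A] {G : Type*} [Group G] [Fintype G]
  (φ : G →* Multiplicative (AddAut A))

def normHom : A →+ A :=
  ∑ g : G, (toAdd (φ g)).toAddMonoidHom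

def normComplHom : A →+ A :=
  Fintype.card G • AddMonoidHom.id A - normHom φ

@[simp]
theorem normHom_apply (t : A) : normHom φ t = ∑ g : G, toAdd (φ g) t := by
  simp [normHom]

theorem normComplHom_apply (t : A) : normComplHom φ t = Fintype.card G • t - normHom φ t :=
  rfl

theorem apply_normHom (g : G) (t : A) : toAdd (φ g) (normHom φ t) = normHom φ t := by
  rw [normHom_apply, map_sum]
  exact Fintype.sum_equiv (Equiv.mulLeft g) _ _ fun h => by simp

theorem normHom_eq_card_nsmul {t : A} (ht : ∀ g : G, toAdd (φ g) t = t) :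
    normHom φ t = Fintype.card G • t := by
  simp [ht, Finset.card_univ]

theorem normHom_normComplHom (t : A) : normHom φ (normComplHom φ t) = 0 := by
  rw [normComplHom_apply, map_sub, map_nsmul,
    normHom_eq_card_nsmul φ (apply_normHom φ · t), sub_self]

theorem card_nsmul_eq_zero_of_mem_range_normComplHom {t : A}
    (hrange : t ∈ (normComplHom φ).range) (ht : ∀ g : G, toAdd (φ g) t = t) :
    Fintype.card G • t = 0 := by
  obtain ⟨s, rfl⟩ := hrange
  rw [← normHom_eq_card_nsmul φ ht, normHom_normComplHom]

theorem range_normHom_sup_range_normComplHom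
    (hdiv : ∀ t : A, ∃ s : A, Fintype.card G • s = t) :
    (normHom φ).range ⊔ (normComplHom φ).range = ⊤ := by
  refine eq_top_iff.mpr fun t _ => ?_
  obtain ⟨s, rfl⟩ := hdiv t
  exact AddSubgroup.mem_sup.mpr
    ⟨normHom φ s, ⟨s, rfl⟩, normComplHom φ s, ⟨s, rfl⟩, by rw [normComplHom_apply]; abel⟩

variable [TopologicalSpace A] [IsTopologicalAddGroup A]

theorem continuous_normHom (hcont : ∀ g : G, Continuous ⇑(toAdd (φ g))) :
    Continuous (normHom φ) := by
  have h : ⇑(normHom φ) = fun t => ∑ g : G, toAdd (φ g) t := funext (normHom_apply φ)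
  exact h ▸ continuous_finsetSum _ fun g _ => hcont g

theorem continuous_normComplHom (hcont : ∀ g : G, Continuous ⇑(toAdd (φ g))) :
    Continuous (normComplHom φ) :=
  ((continuous_id.nsmul _).sub (continuous_normHom φ hcont) :)

end AddAut

namespace AddCircle

variable {ι : Type*} {p : ℝ}

theorem finite_pi_torsion [Finite ι] {k : ℕ} (hk : 0 < k) :
    {t : ι → AddCircle p | k • t = 0}.Finite :=
  (Set.Finite.pi fun _ => finite_torsion p hk).subset fun _ ht i _ => congrFun ht i

theorem exists_pi_nsmul_eq [Fact (0 < p)] {k : ℕ} (hk : k ≠ 0) (t : ι → AddCircle p) :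
    ∃ s : ι → AddCircle p, k • s = t := by
  obtain ⟨s, hs⟩ := DivisibleBy.surjective_smul (ι → AddCircle p) ℤ
    (Int.natCast_ne_zero.mpr hk) t
  exact ⟨s, (natCast_zsmul s k).symm.trans hs⟩

end AddCircle

open AddAut in
/-- Let `G` be a finite group acting by continuous group automorphisms on a torus
`T = (ℝ/ℤ)^n`.  Then there are subtori `T₁, T₂` of `T` (closed connected subgroups) such
that `T₁` lies in the fixed-point subgroup `T^G`, the fixed-point set of `G` in `T₂` is
finite, and `T₁` and `T₂` together generate `T`. -/
theorem exists_subtori_of_finite_group_action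
    (n : ℕ) (G : Type*) [Group G] [Finite G]
    (φ : G →* Multiplicative (AddAut (Fin n → AddCircle (1 : ℝ))))
    (hcont : ∀ g : G, Continuous ⇑(Multiplicative.toAdd (φ g))) :
    ∃ T₁ T₂ : AddSubgroup (Fin n → AddCircle (1 : ℝ)),
      IsClosed (T₁ : Set (Fin n → AddCircle (1 : ℝ))) ∧
      IsConnected (T₁ : Set (Fin n → AddCircle (1 : ℝ))) ∧
      IsClosed (T₂ : Set (Fin n → AddCircle (1 : ℝ))) ∧
      IsConnected (T₂ : Set (Fin n → AddCircle (1 : ℝ))) ∧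
      (∀ t ∈ T₁, ∀ g : G, Multiplicative.toAdd (φ g) t = t) ∧
      ({t : Fin n → AddCircle (1 : ℝ) | t ∈ T₂ ∧ ∀ g : G, Multiplicative.toAdd (φ g) t = t}.Finite) ∧
      T₁ ⊔ T₂ = ⊤ := by
  have := Fintype.ofFinite G
  have hN := continuous_normHom φ hcont
  have hM := continuous_normComplHom φ hcont
  refine ⟨(normHom φ).range, (normComplHom φ).range, (isCompact_range hN).isClosed,
    isConnected_range hN, (isCompact_range hM).isClosed, isConnected_range hM, ?_, ?_,
    range_normHom_sup_range_normComplHom φ (AddCircle.exists_pi_nsmul_eq Fintype.card_ne_zero)⟩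
  · rintro _ ⟨s, rfl⟩ g
    exact apply_normHom φ g s
  · exact (AddCircle.finite_pi_torsion Fintype.card_pos).subset fun t ⟨hrange, ht⟩ =>
      card_nsmul_eq_zero_of_mem_range_normComplHom φ hrange ht
end

section
/- Let M be a 2n-dimensional quasitoric manifold whose cohomology ring is H^*(M;ℤ) = ℤ[u₁,…,u_m]/(I+J) with deg u_i = 2, where I is generated by the square-free monomials corresponding to collections of facets with empty intersection. If f is a facet coloring of the orbit polytope with n colors and V = ⊕_{i=1}^n L_{f^{-1}(i)} where c₁(L_{f^{-1}(i)}) = Σ_{F_j ∈ f^{-1}(i)} ε_j u_j with signs ε_j ∈ {±1}, then p₁(V) = p₁(M); that is, Σ_{i=1}^n (Σ_{F_j ∈ f^{-1}(i)} ε_j u_j)² = Σ_{j=1}^m u_j² in H⁴(M;ℤ). -/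
/-!
Equally coloured facets are disjoint, so in the square of each colour sum all cross terms
`ε_j ε_{j'} u_j u_{j'}` vanish, and `ε_j² = 1` leaves `Σ_{f(F_j) = i} u_j²`. Summing over the
colours regroups the fibres of `f` into `Σ_j u_j²`.
-/

open Finset

theorem Finset.sum_sq_of_pairwise_mul_eq_zero {ι R : Type*} [CommSemiring R] (s : Finset ι)
    (v : ι → R) (hv : (s : Set ι).Pairwise fun j j' => v j * v j' = 0) :
    (∑ j ∈ s, v j) ^ 2 = ∑ j ∈ s, v j ^ 2 := by
  rw [sq, sum_mul_sum]
  refine sum_congr rfl fun j hj => ?_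
  rw [sum_eq_single_of_mem j hj fun j' hj' hne => hv hj hj' hne.symm, sq]

theorem zsmul_sq_of_sq_eq_one {R : Type*} [Ring R] {ε : ℤ} (hε : ε ^ 2 = 1) (x : R) :
    (ε • x) ^ 2 = x ^ 2 := by
  rw [smul_pow, hε, one_smul]

/-- In the cohomology ring `H^*(M;ℤ)` of a quasitoric manifold, generated by the classes
`u₁, …, u_m` dual to the characteristic submanifolds (with `u_j u_{j'} = 0` whenever the
facets `F_j, F_{j'}` are disjoint), a facet coloring `f` with `n` colors yields, for any
signs `ε_j ∈ {±1}`, the identity `p₁(V) = p₁(M)`: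
`Σ_{i=1}^n (Σ_{F_j ∈ f⁻¹(i)} ε_j u_j)² = Σ_{j=1}^m u_j²`. -/
theorem coloring_first_pontryagin
    (R : Type*) [CommRing R] (n m : ℕ) (u : Fin m → R)
    (meets : Fin m → Fin m → Prop)  -- `meets j j'` means `F_j ∩ F_{j'} ≠ ∅`
    (f : Fin m → Fin n)
    -- `f` is a facet coloring: intersecting facets get different colors
    (hcolor : ∀ j j' : Fin m, j ≠ j' → meets j j' → f j ≠ f j')
    -- products of classes of disjoint facets vanish
    (hdisj : ∀ j j' : Fin m, j ≠ j' → ¬ meets j j' → u j * u j' = 0)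
    (ε : Fin m → ℤ) (hε : ∀ j, ε j = 1 ∨ ε j = -1) :
    ∑ i : Fin n, (∑ j ∈ Finset.univ.filter (fun j => f j = i), ε j • u j) ^ 2
      = ∑ j : Fin m, u j ^ 2 := by
  have same_color_orthogonal (i : Fin n) :
      ((univ.filter fun j => f j = i : Finset (Fin m)) : Set (Fin m)).Pairwise
        fun j j' => ε j • u j * ε j' • u j' = 0 := by
    intro j hj j' hj' hne
    simp only [coe_filter, mem_univ, true_and, Set.mem_ofPred_eq] at hj hj'
    have hnm : ¬ meets j j' := fun h => hcolor j j' hne h (hj.trans hj'.symm)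
    rw [smul_mul_smul_comm, hdisj j j' hne hnm, smul_zero]
  have hε_sq (j : Fin m) : ε j ^ 2 = 1 := by rcases hε j with h | h <;> simp [h]
  calc ∑ i, (∑ j ∈ univ.filter (fun j => f j = i), ε j • u j) ^ 2
      = ∑ i, ∑ j ∈ univ.filter (fun j => f j = i), u j ^ 2 := by
        refine sum_congr rfl fun i _ => ?_
        rw [sum_sq_of_pairwise_mul_eq_zero _ _ (same_color_orthogonal i)]
        exact sum_congr rfl fun j _ => zsmul_sq_of_sq_eq_one (hε_sq j) (u j)
    _ = ∑ j, u j ^ 2 := sum_fiberwise _ f _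
end

section
/- Let M be a 2n-dimensional quasitoric manifold over a polytope P admitting a facet coloring f with n colors, with cohomology ℤ[u₁,…,u_m]/(I+J) as above. Suppose that for every choice of signs ε_j ∈ {±1} the product Π_{i=1}^n (Σ_{F_j ∈ f^{-1}(i)} ε_j u_j) vanishes in H^{2n}(M;ℤ). Then for every n-tuple (F_{i₁},…,F_{i_n}) ∈ f^{-1}(1) × ⋯ × f^{-1}(n) the monomial u_{i₁}⋯u_{i_n} vanishes. This yields a contradiction, since for any vertex of P the facets through it have pairwise distinct colors and the corresponding monomial is nonzero; hence some choice of signs gives a nonzero product. -/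
/-!
Flipping the sign of a single facet `b` of color `a` changes only the `a`-th factor of the
product, and by `2 • u b`. Subtracting the two vanishing products therefore replaces the
`a`-th factor by `2 • u b`, and since `R` has no `ℤ`-torsion the `2` can be cancelled.
Doing this color by color turns every factor into the chosen `u (g i)`.
-/

open Finset Function

def IsSignVector {ι : Type*} (ε : ι → ℤ) : Prop :=
  ∀ j, ε j = 1 ∨ ε j = -1

theorem IsSignVector.update {ι : Type*} [DecidableEq ι] {ε : ι → ℤ} (hε : IsSignVector ε)
    (b : ι) {s : ℤ} (hs : s = 1 ∨ s = -1) : IsSignVector (update ε b s) := by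
  intro j
  rcases eq_or_ne j b with rfl | hj
  · simpa using hs
  · simpa [update_of_ne hj] using hε j

section

variable {ι κ R : Type*} [Fintype ι] [DecidableEq κ] [CommRing R]

def colorSum (f : ι → κ) (u : ι → R) (ε : ι → ℤ) (i : κ) : R :=
  ∑ j ∈ univ.filter (fun j => f j = i), ε j • u j

theorem colorSum_update_of_ne [DecidableEq ι] (f : ι → κ) (u : ι → R) (ε : ι → ℤ) {b : ι}
    {i : κ} (h : f b ≠ i) (s : ℤ) : colorSum f u (update ε b s) i = colorSum f u ε i := by
  refine sum_congr rfl fun j hj => ?_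
  rw [update_of_ne]
  rintro rfl
  exact h (mem_filter.1 hj).2

theorem colorSum_update_sub_colorSum_update [DecidableEq ι] (f : ι → κ) (u : ι → R)
    (ε : ι → ℤ) (b : ι) (s t : ℤ) :
    colorSum f u (update ε b s) (f b) - colorSum f u (update ε b t) (f b) = (s - t) • u b := by
  rw [colorSum, colorSum, ← sum_sub_distrib, sum_eq_single_of_mem b (by simp)]
  · simp [sub_smul]
  · intro j _ hj
    simp [update_of_ne hj]

theorem mul_prod_transversal_eq_zero [DecidableEq ι] [NoZeroSMulDivisors ℤ R] {f : ι → κ}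
    {u : ι → R} {g : κ → ι} (hg : ∀ i, f (g i) = i) (S : Finset κ) (x : R)
    (h : ∀ ε, IsSignVector ε → x * ∏ i ∈ S, colorSum f u ε i = 0) :
    x * ∏ i ∈ S, u (g i) = 0 := by
  induction S using Finset.induction_on generalizing x with
  | empty => simpa using h (fun _ => 1) fun _ => Or.inl rfl
  | @insert a S haS ih =>
    rw [prod_insert haS, ← mul_assoc]
    refine ih _ fun ε hε => ?_
    have hrest (s : ℤ) :
        ∏ i ∈ S, colorSum f u (update ε (g a) s) i = ∏ i ∈ S, colorSum f u ε i :=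
      prod_congr rfl fun i hi =>
        colorSum_update_of_ne f u ε (by rw [hg]; rintro rfl; exact haS hi) s
    have hsign (s : ℤ) (hs : s = 1 ∨ s = -1) :
        x * (colorSum f u (update ε (g a) s) a * ∏ i ∈ S, colorSum f u ε i) = 0 := by
      rw [← hrest s, ← prod_insert haS]
      exact h _ (hε.update _ hs)
    have htwo : (2 : ℤ) • (x * u (g a) * ∏ i ∈ S, colorSum f u ε i) = 0 := by
      have hdiff := colorSum_update_sub_colorSum_update f u ε (g a) 1 (-1)
      rw [hg, zsmul_eq_mul] at hdiff
      rw [zsmul_eq_mul]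
      push_cast at hdiff ⊢
      linear_combination hsign 1 (Or.inl rfl) - hsign (-1) (Or.inr rfl) -
        x * (∏ i ∈ S, colorSum f u ε i) * hdiff
    exact (smul_eq_zero.1 htwo).resolve_left two_ne_zero

theorem prod_transversal_eq_zero [Fintype κ] [DecidableEq ι] [NoZeroSMulDivisors ℤ R]
    {f : ι → κ} {u : ι → R} (h : ∀ ε, IsSignVector ε → ∏ i, colorSum f u ε i = 0)
    {g : κ → ι} (hg : ∀ i, f (g i) = i) : ∏ i, u (g i) = 0 := by
  simpa using mul_prod_transversal_eq_zero hg univ (1 : R) fun ε hε => (one_mul _).trans (h ε hε)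

end

/-- In the cohomology ring of a `2n`-dimensional quasitoric manifold over a polytope with a
facet coloring `f` with `n` colors (classes `u₁,…,u_m`, which span a torsion-free group in
even degrees): if for every choice of signs `ε_j ∈ {±1}` the product
`Π_{i=1}^n (Σ_{F_j ∈ f⁻¹(i)} ε_j u_j)` vanishes, then every monomial `u_{i₁}⋯u_{i_n}` with
one factor from each color class vanishes.  Consequently, if some vertex monomial (one
facet of each color) is nonzero, then some choice of signs gives a nonzero product. -/
theorem sign_average_product
    (R : Type*) [CommRing R] [NoZeroSMulDivisors ℤ R]
    (n m : ℕ) (u : Fin m → R) (f : Fin m → Fin n) :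
    ((∀ ε : Fin m → ℤ, (∀ j, ε j = 1 ∨ ε j = -1) →
        ∏ i : Fin n, ∑ j ∈ Finset.univ.filter (fun j => f j = i), ε j • u j = 0) →
      ∀ g : Fin n → Fin m, (∀ i, f (g i) = i) → ∏ i : Fin n, u (g i) = 0) ∧
    ((∃ g : Fin n → Fin m, (∀ i, f (g i) = i) ∧ ∏ i : Fin n, u (g i) ≠ 0) →
      ∃ ε : Fin m → ℤ, (∀ j, ε j = 1 ∨ ε j = -1) ∧
        ∏ i : Fin n, ∑ j ∈ Finset.univ.filter (fun j => f j = i), ε j • u j ≠ 0) := by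
  refine ⟨fun h g hg => prod_transversal_eq_zero h hg, fun ⟨g, hg, hne⟩ => ?_⟩
  by_contra! hall
  exact hne (prod_transversal_eq_zero hall hg)
end

section
/- Let G be a compact Lie group fitting in an exact sequence 1 → T → G → W → 1 with T a torus and W finite cyclic, generated by the image of g ∈ G. Suppose T = T₁·T₂ where T₁, T₂ are W-invariant subtori with W acting trivially on T₁ and T₂^W finite. Then there exists t ∈ T₁ such that, setting g' = g t⁻¹, one has (g')^{#W} ∈ T₂; consequently the subgroup G' of G generated by g' and T₂ fits in an exact sequence 1 → T₂ → G' → W → 1. -/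
/-!
Write `n = #W` and `g ^ n = t₁ * t₂` with `tᵢ ∈ Tᵢ`. Since `T₁` is divisible, `t₁ = s ^ n` with
`s ∈ T₁`, and `s` is central because `W` acts trivially on `T₁`. Hence `(g * s⁻¹) ^ n = s⁻ⁿ g ^ n = t₂`.
The image of `g' = g * s⁻¹` in `W` is that of `g`, a generator of order `n`; so the subgroup
generated by `g'` and the normal subgroup `T₂` is `⟨g'⟩ T₂`, surjects onto `W`, and an element
`g' ^ k u` of it lies in `T` only if `n ∣ k`, i.e. only if it lies in `T₂`.
-/

namespace Subgroup

variable {G : Type*} [Group G]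

theorem closure_insert_eq_zpowers_sup (x : G) (N : Subgroup G) :
    closure (insert x (N : Set G)) = zpowers x ⊔ N := by
  rw [Set.insert_eq, closure_union, ← zpowers_eq_closure, closure_eq]

theorem closure_insert_inf_eq_of_pow_orderOf_mem {N T : Subgroup G} [N.Normal] [T.Normal]
    (hNT : N ≤ T) {x : G} (hx : x ^ orderOf (x : G ⧸ T) ∈ N) :
    closure (insert x (N : Set G)) ⊓ T = N := by
  refine le_antisymm ?_ (le_inf (closure_insert_eq_zpowers_sup x N ▸ le_sup_right) hNT)
  intro y hy
  obtain ⟨hyC, hyT⟩ := mem_inf.1 hy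
  rw [closure_insert_eq_zpowers_sup, mem_sup_of_normal_right] at hyC
  obtain ⟨_, hk, u, hu, rfl⟩ := hyC
  obtain ⟨k, rfl⟩ := mem_zpowers_iff.1 hk
  have hxk : x ^ k ∈ T := (mul_mem_cancel_right (hNT hu)).1 hyT
  obtain ⟨m, rfl⟩ : (orderOf (x : G ⧸ T) : ℤ) ∣ k := by
    rw [orderOf_dvd_iff_zpow_eq_one, ← QuotientGroup.mk_zpow, QuotientGroup.eq_one_iff]
    exact hxk
  rw [zpow_mul, zpow_natCast]
  exact mul_mem (zpow_mem hx m) hu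

end Subgroup

theorem Commute.mul_inv_pow_eq {G : Type*} [Group G] {g s u : G} (hgs : Commute g s) {n : ℕ}
    (h : g ^ n = s ^ n * u) : (g * s⁻¹) ^ n = u := by
  rw [hgs.inv_right.eq, hgs.inv_right.symm.mul_pow, h, inv_pow, inv_mul_cancel_left]

theorem exists_good_preimage_general
    (G : Type*) [Group G] (T : Subgroup G) [T.Normal]
    (g : G)
    -- `W = G/T` is cyclic, generated by the image of `g`
    (hgen : ∀ w : G ⧸ T, ∃ k : ℤ, w = (QuotientGroup.mk g : G ⧸ T) ^ k)
    (hg : g ^ Nat.card (G ⧸ T) ∈ T)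
    (T₁ T₂ : Subgroup G) (hT₁ : T₁ ≤ T) (hT₂ : T₂ ≤ T)
    -- `T` is generated by `T₁` and `T₂`
    (hprod : ∀ t ∈ T, ∃ t₁ ∈ T₁, ∃ t₂ ∈ T₂, t = t₁ * t₂)
    -- `W` acts trivially on `T₁`
    (htriv : ∀ γ : G, ∀ t ∈ T₁, γ * t * γ⁻¹ = t)
    -- `T₁` is a torus, hence divisible
    (hdiv : ∀ t ∈ T₁, ∃ s ∈ T₁, s ^ Nat.card (G ⧸ T) = t)
    -- `T₂` is `W`-invariant and `T₂^W` is finite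
    (hinv : ∀ γ : G, ∀ t ∈ T₂, γ * t * γ⁻¹ ∈ T₂) :
    ∃ t ∈ T₁,
      (g * t⁻¹) ^ Nat.card (G ⧸ T) ∈ T₂ ∧
      T₂ ≤ Subgroup.closure (insert (g * t⁻¹) (T₂ : Set G)) ∧
      Subgroup.closure (insert (g * t⁻¹) (T₂ : Set G)) ⊓ T = T₂ ∧
      ∀ w : G ⧸ T, ∃ x ∈ Subgroup.closure (insert (g * t⁻¹) (T₂ : Set G)),
        (QuotientGroup.mk x : G ⧸ T) = w := by
  obtain ⟨_, ht₁, t₂, ht₂, hgn⟩ := hprod _ hg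
  obtain ⟨s, hs, rfl⟩ := hdiv _ ht₁
  have : T₂.Normal := ⟨fun t ht γ => hinv γ t ht⟩
  have hgs : Commute g s := mul_inv_eq_iff_eq_mul.1 (htriv g s hs)
  have hpow : (g * s⁻¹) ^ Nat.card (G ⧸ T) = t₂ := hgs.mul_inv_pow_eq hgn
  have hmk : ((g * s⁻¹ : G) : G ⧸ T) = g := QuotientGroup.eq.2 (by simpa using hT₁ hs)
  have horder : orderOf (g : G ⧸ T) = Nat.card (G ⧸ T) :=
    orderOf_eq_card_of_forall_mem_zpowers fun w =>
      Subgroup.mem_zpowers_iff.2 ((hgen w).imp fun _ => Eq.symm)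
  refine ⟨s, hs, hpow ▸ ht₂,
    fun t ht => Subgroup.subset_closure (Set.mem_insert_of_mem _ ht),
    Subgroup.closure_insert_inf_eq_of_pow_orderOf_mem hT₂ (by rwa [hmk, horder, hpow]),
    fun w => ?_⟩
  obtain ⟨k, rfl⟩ := hgen w
  exact ⟨(g * s⁻¹) ^ k, zpow_mem (Subgroup.subset_closure (Set.mem_insert _ _)) k,
    by rw [QuotientGroup.mk_zpow, hmk]⟩

/-- Let `G` be a compact Lie group with identity component a torus `T` (an abelian normal
subgroup) and `W = G/T` finite cyclic, generated by the image of `g ∈ G`.  Suppose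
`T = T₁ · T₂` where `W` acts trivially on the subtorus `T₁` (so `T₁` is divisible, i.e.
every element is a `#W`-th power inside `T₁`), `T₂` is `W`-invariant and `T₂^W` is finite.
Then there is `t ∈ T₁` such that `g' = g t⁻¹` satisfies `(g')^{#W} ∈ T₂`, and the subgroup
`G'` generated by `g'` and `T₂` fits in an exact sequence `1 → T₂ → G' → W → 1`. -/
theorem exists_good_preimage
    (G : Type*) [Group G] (T : Subgroup G) [T.Normal] [Finite (G ⧸ T)]
    (hTcomm : ∀ a ∈ T, ∀ b ∈ T, a * b = b * a)
    (g : G)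
    -- `W = G/T` is cyclic, generated by the image of `g`
    (hgen : ∀ w : G ⧸ T, ∃ k : ℤ, w = (QuotientGroup.mk g : G ⧸ T) ^ k)
    (hg : g ^ Nat.card (G ⧸ T) ∈ T)
    (T₁ T₂ : Subgroup G) (hT₁ : T₁ ≤ T) (hT₂ : T₂ ≤ T)
    -- `T` is generated by `T₁` and `T₂`
    (hprod : ∀ t ∈ T, ∃ t₁ ∈ T₁, ∃ t₂ ∈ T₂, t = t₁ * t₂)
    -- `W` acts trivially on `T₁`
    (htriv : ∀ γ : G, ∀ t ∈ T₁, γ * t * γ⁻¹ = t)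
    -- `T₁` is a torus, hence divisible
    (hdiv : ∀ t ∈ T₁, ∃ s ∈ T₁, s ^ Nat.card (G ⧸ T) = t)
    -- `T₂` is `W`-invariant and `T₂^W` is finite
    (hinv : ∀ γ : G, ∀ t ∈ T₂, γ * t * γ⁻¹ ∈ T₂)
    (hfix : {t : G | t ∈ T₂ ∧ g * t * g⁻¹ = t}.Finite) :
    ∃ t ∈ T₁,
      (g * t⁻¹) ^ Nat.card (G ⧸ T) ∈ T₂ ∧
      T₂ ≤ Subgroup.closure (insert (g * t⁻¹) (T₂ : Set G)) ∧
      Subgroup.closure (insert (g * t⁻¹) (T₂ : Set G)) ⊓ T = T₂ ∧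
      ∀ w : G ⧸ T, ∃ x ∈ Subgroup.closure (insert (g * t⁻¹) (T₂ : Set G)),
        (QuotientGroup.mk x : G ⧸ T) = w :=
  exists_good_preimage_general G T g hgen hg T₁ T₂ hT₁ hT₂ hprod htriv hdiv hinv
end
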